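/- arXiv:1101.1850 — 3 statements merged into one kernel-verified Lean document; each statement's English description precedes it below -/
import Mathlib

section
/- Let G be a finite group and H a subgroup of G. There is a group isomorphism from the abelianization H^{ab} = H/[H,H] to the group homology H_1(G, Z[G] ⊗_{Z[H]} Z) (which is the Tate cohomology group H^{-2}(G, Z[G] ⊗_{Z[H]} Z)), sending the coset σ[H,H] of σ ∈ H to the homology class of the 1-cycle [σ] ⊗ (1 ⊗ 1). -/
/-!
STATEMENT 0: For a finite group `G` and a subgroup `H ≤ G`, there is a group isomorphism
`H^{ab} ≃ H₁(G, ℤ[G] ⊗_{ℤ[H]} ℤ)` (i.e. `H⁻²(G, ℤ[G] ⊗_{ℤ[H]} ℤ)` in Tate cohomology)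
sending `σ[H,H]` to the class of the bar-resolution 1-cycle `[σ] ⊗ (1 ⊗ 1)`.

Here the induced module `ℤ[G] ⊗_{ℤ[H]} ℤ` is realized, via its canonical `ℤ[G]`-basis of
left cosets, as the permutation module `(G ⧸ H) →₀ ℤ` (free abelian group on `G ⧸ H`, with
`G` acting by left translation of cosets); the element `1 ⊗ 1` corresponds to
`single ⟦1⟧ 1`. Group homology `H₁` is computed from the bar resolution: 1-chains are
elements of `G →₀ A` (the symbol `[σ] ⊗ a` being `single σ a`), the degree-1 differential is
`[σ] ⊗ a ↦ σ • a - a`, and the degree-2 differential is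
`[σ, τ] ⊗ a ↦ [σ] ⊗ τ • a - [στ] ⊗ a + [τ] ⊗ a`.
-/

namespace BarH1

variable (G : Type) [Group G] (A : Type) [AddCommGroup A] [DistribMulAction G A]

/-- The boundary map `(G →₀ A) →+ A` of the bar resolution in degree 1:
`[σ] ⊗ a ↦ σ • a - a`. -/
noncomputable def d1 : (G →₀ A) →+ A :=
  Finsupp.liftAddHom fun σ =>
    (DistribMulAction.toAddMonoidHom A σ : A →+ A) - AddMonoidHom.id A

/-- 1-cycles of the bar resolution. -/
noncomputable def cycles : AddSubgroup (G →₀ A) := (d1 G A).ker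

/-- 1-boundaries: the image of the degree-2 bar differential
`[σ, τ] ⊗ a ↦ [σ] ⊗ τ • a - [στ] ⊗ a + [τ] ⊗ a`. -/
noncomputable def boundaries : AddSubgroup (G →₀ A) :=
  AddSubgroup.closure {x | ∃ (σ τ : G) (a : A),
    x = Finsupp.single σ (τ • a) - Finsupp.single (σ * τ) a + Finsupp.single τ a}

/-- Group homology `H₁(G, A)` (the Tate cohomology group `H⁻²(G, A)`). -/
noncomputable def H1 :=
  cycles G A ⧸ (boundaries G A).addSubgroupOf (cycles G A)

noncomputable instance : AddCommGroup (H1 G A) :=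
  QuotientAddGroup.Quotient.addCommGroup _

open scoped Classical in
/-- The homology class of a 1-cycle (junk value `0` if the argument is not a cycle). -/
noncomputable def H1mk (f : G →₀ A) : H1 G A :=
  if hf : f ∈ cycles G A then QuotientAddGroup.mk ⟨f, hf⟩ else 0

end BarH1

attribute [local instance] Finsupp.comapSMul Finsupp.comapMulAction Finsupp.comapDistribMulAction

/-!
Choose representatives `r(x) ∈ G` of the cosets `x ∈ G ⧸ H` and put
`c(σ, x) = r(σx)⁻¹ σ r(x) ∈ H`; it satisfies the cocycle identity `c(στ, x) = c(σ, τx) c(τ, x)`.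
Hence `[σ] ⊗ x ↦ c(σ, x)` kills the bar boundaries and induces `H₁(G, ℤ[G/H]) → H^{ab}`, with
inverse `h ↦ [h] ⊗ 1`. That the composite on `H₁` is the identity rests on the congruence
`[σ] ⊗ x ≡ [c(σ, x)] ⊗ 1 + [r(σx)] ⊗ 1 - [r(x)] ⊗ 1` modulo boundaries (the difference of the
boundaries of `[σ, r(x)] ⊗ 1` and `[r(σx), c(σ, x)] ⊗ 1`): summed over a cycle, the last two
terms give `r` applied to its boundary, which is zero.
-/

namespace BarH1

open Finsupp

section General

variable {G : Type} [Group G] {A : Type} [AddCommGroup A] [DistribMulAction G A]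

theorem d1_single (σ : G) (a : A) : d1 G A (single σ a) = σ • a - a := by
  rw [d1, liftAddHom_apply_single]
  rfl

theorem single_mem_cycles_of_smul_eq {σ : G} {a : A} (h : σ • a = a) :
    single σ a ∈ cycles G A := by
  show d1 G A _ = 0
  rw [d1_single, h, sub_self]

theorem bar_boundary_mem_boundaries (σ τ : G) (a : A) :
    single σ (τ • a) - single (σ * τ) a + single τ a ∈ boundaries G A :=
  AddSubgroup.subset_closure ⟨σ, τ, a, rfl⟩

theorem mk_eq_mk_of_sub_mem_boundaries {f g : G →₀ A} (hf : f ∈ cycles G A)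
    (hg : g ∈ cycles G A) (h : g - f ∈ boundaries G A) :
    (QuotientAddGroup.mk ⟨f, hf⟩ : H1 G A) = QuotientAddGroup.mk ⟨g, hg⟩ := by
  rw [QuotientAddGroup.eq, AddSubgroup.mem_addSubgroupOf, AddSubgroup.coe_add,
    AddSubgroup.coe_neg, neg_add_eq_sub]
  exact h

theorem H1mk_of_mem_cycles {f : G →₀ A} (hf : f ∈ cycles G A) :
    H1mk G A f = QuotientAddGroup.mk ⟨f, hf⟩ :=
  dif_pos hf

noncomputable def stabilizerToH1 (a : A) :
    MulAction.stabilizer G a →* Multiplicative (H1 G A) where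
  toFun g := .ofAdd (QuotientAddGroup.mk ⟨single (g : G) a, single_mem_cycles_of_smul_eq g.2⟩)
  map_one' := by
    refine congrArg Multiplicative.ofAdd ((QuotientAddGroup.eq_zero_iff _).mpr ?_)
    rw [AddSubgroup.mem_addSubgroupOf]
    simpa using bar_boundary_mem_boundaries (1 : G) 1 a
  map_mul' g₁ g₂ := by
    refine congrArg Multiplicative.ofAdd (mk_eq_mk_of_sub_mem_boundaries _ _ ?_)
    have hb := bar_boundary_mem_boundaries (g₁ : G) g₂ a
    rw [MulAction.mem_stabilizer_iff.mp g₂.2] at hb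
    convert hb using 1
    push_cast
    abel

end General

section Induced

variable {G : Type} [Group G] (H : Subgroup G)

local notation "ℤ[G/H]" => (G ⧸ H) →₀ ℤ
local notation "𝟙" => (single ((1 : G) : G ⧸ H) (1 : ℤ) : (G ⧸ H) →₀ ℤ)

theorem smul_single_coset (g : G) (x : G ⧸ H) (n : ℤ) :
    g • (single x n : ℤ[G/H]) = single (g • x) n :=
  comapSMul_single g x n

theorem smul_single_one_coset (g : G) : g • 𝟙 = single (g : G ⧸ H) 1 := by
  rw [smul_single_coset, MulAction.Quotient.smul_mk, smul_eq_mul, mul_one]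

theorem smul_one_coset_of_mem {h : G} (hh : h ∈ H) :
    h • ((1 : G) : G ⧸ H) = ((1 : G) : G ⧸ H) := by
  rw [MulAction.Quotient.smul_mk, smul_eq_mul, mul_one, QuotientGroup.eq]
  simpa using hh

theorem le_stabilizer_single_one_coset : H ≤ MulAction.stabilizer G 𝟙 := fun _ hh => by
  rw [MulAction.mem_stabilizer_iff, smul_single_coset, smul_one_coset_of_mem H hh]

noncomputable def cosetCocycle (σ : G) (x : G ⧸ H) : H :=
  ⟨(σ • x).out⁻¹ * σ * x.out, by
    rw [mul_assoc, ← QuotientGroup.eq, QuotientGroup.out_eq', ← smul_eq_mul,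
      ← MulAction.Quotient.smul_mk, QuotientGroup.out_eq']⟩

theorem cosetCocycle_mul (σ τ : G) (x : G ⧸ H) :
    cosetCocycle H σ (τ • x) * cosetCocycle H τ x = cosetCocycle H (σ * τ) x := by
  apply Subtype.ext
  show ((σ • τ • x).out⁻¹ * σ * (τ • x).out) * ((τ • x).out⁻¹ * τ * x.out)
      = ((σ * τ) • x).out⁻¹ * (σ * τ) * x.out
  rw [smul_smul]
  group

/-- `c(h, 1) = r(1)⁻¹ h r(1)` with `r(1) ∈ H`. -/
theorem of_cosetCocycle_one_coset (h : H) :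
    Abelianization.of (cosetCocycle H h ((1 : G) : G ⧸ H)) = Abelianization.of h := by
  have hu : ((1 : G) : G ⧸ H).out ∈ H := by
    simpa using QuotientGroup.eq.mp (QuotientGroup.out_eq' ((1 : G) : G ⧸ H))
  have hconj : cosetCocycle H h ((1 : G) : G ⧸ H) = (⟨_, hu⟩ : H)⁻¹ * h * ⟨_, hu⟩ := by
    apply Subtype.ext
    show ((h : G) • ((1 : G) : G ⧸ H)).out⁻¹ * h * ((1 : G) : G ⧸ H).out = _
    rw [smul_one_coset_of_mem H h.2]
    rfl
  rw [hconj, map_mul, map_mul, mul_comm _ (Abelianization.of h), map_inv,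
    inv_mul_cancel_right]

noncomputable def chainsToAbelianization : (G →₀ ℤ[G/H]) →+ Additive (Abelianization H) :=
  liftAddHom fun σ => liftAddHom fun x =>
    zmultiplesHom _ (.ofMul (Abelianization.of (cosetCocycle H σ x)))

theorem chainsToAbelianization_single (σ : G) (x : G ⧸ H) (n : ℤ) :
    chainsToAbelianization H (single σ (single x n)) =
      n • Additive.ofMul (Abelianization.of (cosetCocycle H σ x)) := by
  rw [chainsToAbelianization, liftAddHom_apply_single, liftAddHom_apply_single]
  rfl

theorem chainsToAbelianization_bar_boundary (σ τ : G) (a : ℤ[G/H]) :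
    chainsToAbelianization H (single σ (τ • a) - single (σ * τ) a + single τ a) = 0 := by
  induction a using Finsupp.induction_linear with
  | zero => simp
  | add f g hf hg =>
    have hsplit : single σ (τ • (f + g)) - single (σ * τ) (f + g) + single τ (f + g) =
        (single σ (τ • f) - single (σ * τ) f + single τ f) +
          (single σ (τ • g) - single (σ * τ) g + single τ g) := by
      simp only [smul_add, single_add]
      abel
    rw [hsplit, map_add, hf, hg, add_zero]
  | single x n =>
    rw [map_add, map_sub, smul_single_coset, chainsToAbelianization_single,
      chainsToAbelianization_single, chainsToAbelianization_single, ← cosetCocycle_mul H σ τ x,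
      map_mul, ofMul_mul, smul_add]
    abel

theorem boundaries_le_ker_chainsToAbelianization :
    boundaries G ℤ[G/H] ≤ (chainsToAbelianization H).ker := by
  rw [boundaries, AddSubgroup.closure_le]
  rintro _ ⟨σ, τ, a, rfl⟩
  exact chainsToAbelianization_bar_boundary H σ τ a

noncomputable def H1ToAbelianization : H1 G ℤ[G/H] →+ Additive (Abelianization H) :=
  QuotientAddGroup.lift _ ((chainsToAbelianization H).comp (cycles G ℤ[G/H]).subtype)
    fun _ hz => boundaries_le_ker_chainsToAbelianization H hz

noncomputable def abelianizationToH1 : Additive (Abelianization H) →+ H1 G ℤ[G/H] :=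
  MonoidHom.toAdditiveLeft <| Abelianization.lift <|
    (stabilizerToH1 𝟙).comp (Subgroup.inclusion (le_stabilizer_single_one_coset H))

theorem abelianizationToH1_of (h : H) :
    abelianizationToH1 H (.ofMul (Abelianization.of h)) =
      QuotientAddGroup.mk ⟨single (h : G) 𝟙, single_mem_cycles_of_smul_eq
        (le_stabilizer_single_one_coset H h.2)⟩ :=
  congrArg Multiplicative.toAdd (Abelianization.lift_apply_of _ h)

theorem H1ToAbelianization_abelianizationToH1 (a : Additive (Abelianization H)) :
    H1ToAbelianization H (abelianizationToH1 H a) = a := by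
  induction a using Additive.rec with | _ a =>
  induction a using QuotientGroup.induction_on with | _ h =>
  change H1ToAbelianization H (abelianizationToH1 H (.ofMul (Abelianization.of h))) = _
  rw [abelianizationToH1_of]
  show chainsToAbelianization H (single (h : G) 𝟙) = _
  rw [chainsToAbelianization_single, one_zsmul, of_cosetCocycle_one_coset]
  rfl

noncomputable def cocycleChain : (G →₀ ℤ[G/H]) →+ (G →₀ ℤ[G/H]) :=
  liftAddHom fun σ => liftAddHom fun x =>
    (singleAddHom (cosetCocycle H σ x : G)).comp (singleAddHom ((1 : G) : G ⧸ H))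

theorem cocycleChain_single (σ : G) (x : G ⧸ H) :
    cocycleChain H (single σ (single x 1)) = single (cosetCocycle H σ x : G) 𝟙 := by
  rw [cocycleChain, liftAddHom_apply_single, liftAddHom_apply_single]
  rfl

noncomputable def representativeChain : ℤ[G/H] →+ (G →₀ ℤ[G/H]) :=
  liftAddHom fun x => (singleAddHom x.out).comp (singleAddHom ((1 : G) : G ⧸ H))

theorem representativeChain_single (x : G ⧸ H) :
    representativeChain H (single x 1) = single x.out 𝟙 := by
  rw [representativeChain, liftAddHom_apply_single]
  rfl

theorem cocycleChain_mem_cycles (c : G →₀ ℤ[G/H]) : cocycleChain H c ∈ cycles G ℤ[G/H] := by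
  suffices (d1 G ℤ[G/H]).comp (cocycleChain H) = 0 from DFunLike.congr_fun this c
  refine addHom_ext' fun σ => addHom_ext' fun x => AddMonoidHom.ext_int ?_
  show d1 G ℤ[G/H] (cocycleChain H (single σ (single x 1))) = 0
  rw [cocycleChain_single, d1_single,
    le_stabilizer_single_one_coset H (cosetCocycle H σ x).2, sub_self]

theorem sub_cocycleChain_sub_representativeChain_mem_boundaries (c : G →₀ ℤ[G/H]) :
    c - cocycleChain H c - representativeChain H (d1 G ℤ[G/H] c) ∈ boundaries G ℤ[G/H] := by
  let π := QuotientAddGroup.mk' (boundaries G ℤ[G/H])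
  suffices π.comp (.id _ - cocycleChain H - (representativeChain H).comp (d1 G ℤ[G/H])) = 0 from
    (QuotientAddGroup.eq_zero_iff _).mp (DFunLike.congr_fun this c)
  refine addHom_ext' fun σ => addHom_ext' fun x => AddMonoidHom.ext_int ?_
  show π (single σ (single x 1) - cocycleChain H (single σ (single x 1)) -
    representativeChain H (d1 G ℤ[G/H] (single σ (single x 1)))) = 0
  refine (QuotientAddGroup.eq_zero_iff _).mpr ?_
  rw [d1_single, smul_single_coset, map_sub,
    cocycleChain_single, representativeChain_single, representativeChain_single]
  have hrep : x.out • 𝟙 = single x 1 := by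
    rw [smul_single_one_coset, QuotientGroup.out_eq']
  have hcocycle : (σ • x).out * (cosetCocycle H σ x : G) = σ * x.out := by
    show (σ • x).out * ((σ • x).out⁻¹ * σ * x.out) = σ * x.out
    group
  have hb := sub_mem (bar_boundary_mem_boundaries σ x.out 𝟙)
    (bar_boundary_mem_boundaries (σ • x).out (cosetCocycle H σ x : G) 𝟙)
  rw [hrep, le_stabilizer_single_one_coset H (cosetCocycle H σ x).2, hcocycle] at hb
  convert hb using 1
  abel

theorem abelianizationToH1_chainsToAbelianization (c : G →₀ ℤ[G/H]) :
    abelianizationToH1 H (chainsToAbelianization H c) =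
      QuotientAddGroup.mk ⟨cocycleChain H c, cocycleChain_mem_cycles H c⟩ := by
  suffices (abelianizationToH1 H).comp (chainsToAbelianization H) =
      (QuotientAddGroup.mk' _).comp
        ((cocycleChain H).codRestrict (cycles G ℤ[G/H]) (cocycleChain_mem_cycles H)) from
    DFunLike.congr_fun this c
  refine addHom_ext' fun σ => addHom_ext' fun x => AddMonoidHom.ext_int ?_
  show abelianizationToH1 H (chainsToAbelianization H (single σ (single x 1))) =
    QuotientAddGroup.mk ⟨_, cocycleChain_mem_cycles H (single σ (single x 1))⟩
  rw [chainsToAbelianization_single, one_zsmul, abelianizationToH1_of]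
  exact congrArg _ (Subtype.ext (cocycleChain_single H σ x).symm)

theorem abelianizationToH1_H1ToAbelianization (z : H1 G ℤ[G/H]) :
    abelianizationToH1 H (H1ToAbelianization H z) = z := by
  induction z using QuotientAddGroup.induction_on with | _ z =>
  obtain ⟨c, hc⟩ := z
  refine (abelianizationToH1_chainsToAbelianization H c).trans
    (mk_eq_mk_of_sub_mem_boundaries _ _ ?_)
  simpa [show d1 G ℤ[G/H] c = 0 from hc] using
    sub_cocycleChain_sub_representativeChain_mem_boundaries H c

noncomputable def abelianizationEquivH1 : Additive (Abelianization H) ≃+ H1 G ℤ[G/H] where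
  toFun := abelianizationToH1 H
  invFun := H1ToAbelianization H
  left_inv := H1ToAbelianization_abelianizationToH1 H
  right_inv := abelianizationToH1_H1ToAbelianization H
  map_add' := map_add _

end Induced

end BarH1

theorem abelianization_iso_H1_induced_general
    (G : Type) [Group G] (H : Subgroup G) :
    ∃ φ : Additive (Abelianization H) ≃+ BarH1.H1 G ((G ⧸ H) →₀ ℤ),
      ∀ σ : H, φ (Additive.ofMul (Abelianization.of σ)) =
        BarH1.H1mk G ((G ⧸ H) →₀ ℤ)
          (Finsupp.single (σ : G) (Finsupp.single ((1 : G) : G ⧸ H) (1 : ℤ))) := by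
  refine ⟨BarH1.abelianizationEquivH1 H, fun σ => ?_⟩
  rw [BarH1.H1mk_of_mem_cycles (BarH1.single_mem_cycles_of_smul_eq
    (BarH1.le_stabilizer_single_one_coset H σ.2))]
  exact BarH1.abelianizationToH1_of H σ

theorem abelianization_iso_H1_induced
    (G : Type) [Group G] [Finite G] (H : Subgroup G) :
    ∃ φ : Additive (Abelianization H) ≃+ BarH1.H1 G ((G ⧸ H) →₀ ℤ),
      ∀ σ : H, φ (Additive.ofMul (Abelianization.of σ)) =
        BarH1.H1mk G ((G ⧸ H) →₀ ℤ)
          (Finsupp.single (σ : G) (Finsupp.single ((1 : G) : G ⧸ H) (1 : ℤ))) :=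
  abelianization_iso_H1_induced_general G H
end

section
/- Under these assumptions, the Tate cohomology group H^{-1}(G, X) vanishes; explicitly, every element x ∈ X satisfying ∑_{σ∈G} σx = 0 lies in the subgroup of X generated by the elements σy − y with σ ∈ G and y ∈ X. -/
set_option linter.unusedSectionVars false
set_option synthInstance.maxHeartbeats 1000000
set_option maxHeartbeats 1000000

/-!
STATEMENT 7: Let `L/K` be a Galois extension of number fields with group `G`, `S` a finite
set of places of `K` containing the archimedean and ramified places, with a fixed choice of
a place `p(L)` of `L` above each `p ∈ S`, such that some finite `p0 ∈ S` has decomposition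
group all of `G`.  Then the Tate cohomology group `H⁻¹(G, X)` vanishes: every `x ∈ X` with
`∑_{σ ∈ G} σ • x = 0` lies in the subgroup generated by the elements `σ • y − y` (`σ ∈ G`,
`y ∈ X`).

Here `Y` is the free abelian group on the set `S_L` of places of `L` above `S`, and `X` is
the kernel of the augmentation map `Y → ℤ`.
-/
namespace TateNF

open NumberField IsDedekindDomain

variable (K L : Type) [Field K] [Field L] [NumberField K] [NumberField L]
  [Algebra K L] [IsGalois K L] [FiniteDimensional K L]

/-- The ring homomorphism `𝓞 L → 𝓞 L` obtained by restricting `σ : L ≃ₐ[K] L` to the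
ring of integers. -/
noncomputable def galRes (σ : L ≃ₐ[K] L) : (𝓞 L) →+* (𝓞 L) :=
  ((galRestrict (𝓞 K) K L (𝓞 L) σ).toAlgHom : (𝓞 L) →+* (𝓞 L))

lemma galRes_apply (σ : L ≃ₐ[K] L) (x : 𝓞 L) :
    galRes K L σ x = galRestrict (𝓞 K) K L (𝓞 L) σ x := rfl

lemma galRes_comp (σ τ : L ≃ₐ[K] L) :
    (galRes K L σ).comp (galRes K L τ) = galRes K L (σ * τ) := by
  ext x
  simp [galRes_apply, map_mul, AlgEquiv.mul_apply]

lemma galRes_one : galRes K L 1 = RingHom.id (𝓞 L) := by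
  ext x
  simp [galRes_apply, map_one]

/-- The natural action of the Galois group on the finite places of `L`:
`σ` sends a prime `P` of `𝓞 L` to its image `σ(P)` (the preimage of `P` under `σ⁻¹`). -/
noncomputable instance : MulAction (L ≃ₐ[K] L) (HeightOneSpectrum (𝓞 L)) where
  smul σ v :=
    { asIdeal := Ideal.comap (galRes K L σ⁻¹) v.asIdeal
      isPrime := Ideal.comap_isPrime _ _
      ne_bot := fun h => v.ne_bot <| by
        have hsurj : Function.Surjective (galRes K L σ⁻¹) :=
          (galRestrict (𝓞 K) K L (𝓞 L) σ⁻¹).surjective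
        rw [← Ideal.map_comap_of_surjective _ hsurj v.asIdeal, h, Ideal.map_bot] }
  one_smul v := by
    ext x
    show x ∈ Ideal.comap (galRes K L 1⁻¹) v.asIdeal ↔ _
    rw [inv_one, galRes_one]
    simp
  mul_smul σ τ v := by
    ext x
    show x ∈ Ideal.comap (galRes K L (σ * τ)⁻¹) v.asIdeal ↔
      x ∈ Ideal.comap (galRes K L σ⁻¹) (Ideal.comap (galRes K L τ⁻¹) v.asIdeal)
    rw [Ideal.comap_comap, galRes_comp, mul_inv_rev]

lemma smul_asIdeal (σ : L ≃ₐ[K] L) (v : HeightOneSpectrum (𝓞 L)) :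
    (σ • v).asIdeal = Ideal.comap (galRes K L σ⁻¹) v.asIdeal := rfl

/-- The Galois action on finite places of `L` commutes with restriction to `K`. -/
lemma comap_algebraMap_smul (σ : L ≃ₐ[K] L) (v : HeightOneSpectrum (𝓞 L)) :
    ((σ • v).asIdeal).comap (algebraMap (𝓞 K) (𝓞 L)) =
      v.asIdeal.comap (algebraMap (𝓞 K) (𝓞 L)) := by
  rw [smul_asIdeal, Ideal.comap_comap]
  congr 1
  ext x
  simp [galRes_apply]

/-- A place of a number field `F`: either an infinite place or a finite place
(a nonzero prime of the ring of integers). -/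
abbrev PlaceOf (F : Type) [Field F] [NumberField F] : Type :=
  NumberField.InfinitePlace F ⊕ HeightOneSpectrum (𝓞 F)

/-- `LiesAbove P p` means that the place `P` of `L` lies above the place `p` of `K`. -/
def LiesAbove : PlaceOf L → PlaceOf K → Prop
  | .inl w, .inl u => w.comap (algebraMap K L) = u
  | .inr P, .inr p => P.asIdeal.comap (algebraMap (𝓞 K) (𝓞 L)) = p.asIdeal
  | _, _ => False

/-- The natural action of the Galois group on the places of `L`. -/
noncomputable instance : MulAction (L ≃ₐ[K] L) (PlaceOf L) where
  smul σ := Sum.map (fun w => σ • w) (fun v => σ • v)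
  one_smul := by
    rintro (w | v)
    · show Sum.inl ((1 : L ≃ₐ[K] L) • w) = Sum.inl w
      rw [one_smul]
    · show Sum.inr ((1 : L ≃ₐ[K] L) • v) = Sum.inr v
      rw [one_smul]
  mul_smul σ τ := by
    rintro (w | v)
    · show Sum.inl ((σ * τ) • w) = Sum.inl (σ • τ • w)
      rw [mul_smul]
    · show Sum.inr ((σ * τ) • v) = Sum.inr (σ • τ • v)
      rw [mul_smul]

lemma smul_inl (σ : L ≃ₐ[K] L) (w : NumberField.InfinitePlace L) :
    σ • (Sum.inl w : PlaceOf L) = Sum.inl (σ • w) := rfl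

lemma smul_inr (σ : L ≃ₐ[K] L) (v : HeightOneSpectrum (𝓞 L)) :
    σ • (Sum.inr v : PlaceOf L) = Sum.inr (σ • v) := rfl

lemma liesAbove_smul (σ : L ≃ₐ[K] L) (P : PlaceOf L) (p : PlaceOf K)
    (h : LiesAbove K L P p) : LiesAbove K L (σ • P) p := by
  obtain w | v := P <;> obtain u | q := p
  · rw [smul_inl]
    show (σ • w).comap (algebraMap K L) = u
    rw [NumberField.InfinitePlace.comap_smul,
      show (RingHom.comp (↑σ.symm) (algebraMap K L)) = algebraMap K L from
        RingHom.ext fun x => σ.symm.commutes x]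
    exact h
  · exact (h : False).elim
  · exact (h : False).elim
  · rw [smul_inr]
    show ((σ • v).asIdeal).comap (algebraMap (𝓞 K) (𝓞 L)) = q.asIdeal
    rw [comap_algebraMap_smul]
    exact h

variable (S : Finset (PlaceOf K))

/-- The set `S_L` of places of `L` lying above the places in `S`. -/
def SL : Set (PlaceOf L) := {P | ∃ p ∈ S, LiesAbove K L P p}

/-- The Galois action on `S_L`. -/
noncomputable instance : MulAction (L ≃ₐ[K] L) ↥(SL K L S) where
  smul σ P := ⟨σ • (P : PlaceOf L), by
    obtain ⟨p, hp, h⟩ := P.2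
    exact ⟨p, hp, liesAbove_smul K L σ _ _ h⟩⟩
  one_smul P := Subtype.ext (one_smul _ (P : PlaceOf L))
  mul_smul σ τ P := Subtype.ext (mul_smul σ τ (P : PlaceOf L))

/-- The decomposition group of a place `P ∈ S_L`: the stabilizer of `P` under the Galois
action on the places of `L`. -/
noncomputable def DecompGrp (P : ↥(SL K L S)) : Subgroup (L ≃ₐ[K] L) :=
  MulAction.stabilizer (L ≃ₐ[K] L) (P : PlaceOf L)

attribute [local instance] Finsupp.comapSMul Finsupp.comapMulAction Finsupp.comapDistribMulAction

/-- `Y`: the free abelian group on `S_L`, with the Galois group permuting the basis. -/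
abbrev Y : Type := ↥(SL K L S) →₀ ℤ

/-- The augmentation map `Y → ℤ`, sending every place in `S_L` to `1`. -/
noncomputable def augY : Y K L S →+ ℤ :=
  Finsupp.liftAddHom fun _ => AddMonoidHom.id ℤ

lemma augY_smul (σ : L ≃ₐ[K] L) (f : Y K L S) : augY K L S (σ • f) = augY K L S f := by
  show augY K L S (Finsupp.mapDomain (fun P => σ • P) f) = _
  simp only [augY, Finsupp.liftAddHom_apply]
  exact Finsupp.sum_mapDomain_index (fun _ => rfl) (fun _ _ _ => rfl)

/-- `X`: the kernel of the augmentation map `Y → ℤ`, as a subgroup of `Y`. -/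
noncomputable def Xsub : AddSubgroup (Y K L S) := (augY K L S).ker

lemma mem_Xsub (f : Y K L S) : f ∈ Xsub K L S ↔ augY K L S f = 0 := Iff.rfl

/-- The Galois action on `X`. -/
noncomputable instance : DistribMulAction (L ≃ₐ[K] L) ↥(Xsub K L S) where
  smul σ x := ⟨σ • (x : Y K L S), by
    rw [mem_Xsub, augY_smul]
    exact (mem_Xsub K L S _).mp x.2⟩
  one_smul x := Subtype.ext (one_smul _ (x : Y K L S))
  mul_smul σ τ x := Subtype.ext (mul_smul σ τ (x : Y K L S))
  smul_zero σ := Subtype.ext (smul_zero (A := Y K L S) σ)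
  smul_add σ x y := Subtype.ext (smul_add σ (x : Y K L S) (y : Y K L S))

/-- The element `P - P'` of `X`, for places `P, P' ∈ S_L`. -/
noncomputable def Xgen (P P' : ↥(SL K L S)) : ↥(Xsub K L S) :=
  ⟨Finsupp.single P 1 - Finsupp.single P' 1, by
    rw [mem_Xsub, map_sub]
    simp [augY]⟩

end TateNF

attribute [local instance] Finsupp.comapSMul Finsupp.comapMulAction Finsupp.comapDistribMulAction

/-!
Since `P₀ = p₀(L)` is fixed by all of `G`, every `σ • P - P` equals `σ • (P - P₀) - (P - P₀)`,
so it suffices to show that an element `x` of the permutation module `ℤ[S_L]` with `N x = 0`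
lies in the span of the `σ • P - P`. Push `x` forward to the free abelian group on the orbits
`S_L / G`: the image of `N x` is `|G|` times the image of `x`, so `x` maps to zero, and the kernel
of `ℤ[α] → ℤ[α / G]` is spanned by the differences of points in one orbit.
-/

open Finsupp

theorem Finsupp.mem_closure_single_sub_single_of_mapDomain_eq_zero {α β : Type*} (q : α → β)
    {f : α →₀ ℤ} (hf : mapDomain q f = 0) :
    f ∈ AddSubgroup.closure {z | ∃ a b, q a = q b ∧ z = single a 1 - single b 1} := by
  classical
  rcases isEmpty_or_nonempty α with _ | _
  · rw [Subsingleton.elim f 0]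
    exact zero_mem _
  set π : α → α := Function.invFun q ∘ q
  -- `π` picks one point in each fibre of `q`, so `f - mapDomain π f` is a sum of differences
  have hπ : mapDomain π f = 0 := by rw [mapDomain_comp, hf, mapDomain_zero]
  have hdiff : f = f.sum fun a c => c • (single a 1 - single (π a) 1) := by
    conv_lhs => rw [← sub_zero f, ← hπ, ← f.sum_single]
    rw [mapDomain, sum_sum_index (fun _ => single_zero _) (fun _ _ _ => single_add _ _ _),
      ← sum_sub]
    simp only [sum_single_index, single_zero, smul_sub, smul_single, smul_eq_mul, mul_one]
  rw [hdiff]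
  refine AddSubmonoidClass.finsuppSum_mem _ _ _ fun a _ =>
    zsmul_mem (AddSubgroup.subset_closure ?_) _
  exact ⟨a, π a, (Function.invFun_eq ⟨a, rfl⟩).symm, rfl⟩

theorem Finsupp.mapDomain_orbit_smul {G α : Type*} [Group G] [MulAction G α] (σ : G)
    (f : α →₀ ℤ) :
    mapDomain (Quotient.mk (MulAction.orbitRel G α)) (σ • f) =
      mapDomain (Quotient.mk (MulAction.orbitRel G α)) f := by
  rw [comapSMul_def, ← mapDomain_comp]
  congr 1
  funext a
  exact Quotient.sound ⟨σ, rfl⟩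

theorem Finsupp.mem_closure_single_smul_sub_single_of_sum_smul_eq_zero {G α : Type*} [Group G]
    [Fintype G] [MulAction G α] {f : α →₀ ℤ} (hf : ∑ σ : G, σ • f = 0) :
    f ∈ AddSubgroup.closure {z | ∃ (σ : G) (a : α), z = single (σ • a) 1 - single a 1} := by
  set q := Quotient.mk (MulAction.orbitRel G α)
  have hnorm : Fintype.card G • mapDomain q f = 0 := by
    calc Fintype.card G • mapDomain q f = ∑ σ : G, mapDomain q (σ • f) := by
          simp only [mapDomain_orbit_smul, Finset.sum_const, Finset.card_univ, q]
      _ = mapDomain q (∑ σ : G, σ • f) := (map_sum (mapDomain.addMonoidHom q) _ _).symm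
      _ = 0 := by rw [hf, mapDomain_zero]
  have hq : mapDomain q f = 0 := (nsmul_eq_zero_iff_right Fintype.card_ne_zero).mp hnorm
  refine AddSubgroup.closure_mono ?_ (mem_closure_single_sub_single_of_mapDomain_eq_zero q hq)
  rintro _ ⟨a, b, hab, rfl⟩
  obtain ⟨σ, rfl⟩ := Quotient.exact hab
  exact ⟨σ, b, rfl⟩

open TateNF in
theorem Hminus1_X_vanishes_general
    (K L : Type) [Field K] [Field L] [NumberField K] [NumberField L]
    [Algebra K L] [IsGalois K L] [FiniteDimensional K L]
    (S : Finset (TateNF.PlaceOf K))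
    -- for each `p ∈ S`, a fixed choice of a place `p(L)` of `L` above `p`
    (PL : ∀ p ∈ S, ↥(TateNF.SL K L S))
    -- a finite place `p0 ∈ S` whose decomposition group is all of `G`
    (p0 : TateNF.PlaceOf K) (hp0S : p0 ∈ S)
    (hp0full : TateNF.DecompGrp K L S (PL p0 hp0S) = ⊤)
    :
    ∀ x : Y K L S, x ∈ Xsub K L S → (∑ σ : L ≃ₐ[K] L, σ • x) = 0 →
      x ∈ AddSubgroup.closure
        {z : Y K L S | ∃ (σ : L ≃ₐ[K] L) (y : Y K L S), y ∈ Xsub K L S ∧ z = σ • y - y} := by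
  intro x _ hx
  refine (AddSubgroup.closure_le _).mpr ?_
    (mem_closure_single_smul_sub_single_of_sum_smul_eq_zero hx)
  rintro _ ⟨σ, P, rfl⟩
  set P₀ := PL p0 hp0S
  have hσP₀ : σ • P₀ = P₀ := Subtype.ext (hp0full ▸ Subgroup.mem_top σ : σ ∈ DecompGrp K L S P₀)
  refine AddSubgroup.subset_closure ⟨σ, _, (Xgen K L S P P₀).2, ?_⟩
  simp only [Xgen, smul_sub, comapSMul_single, hσP₀]
  abel

open TateNF in
theorem Hminus1_X_vanishes
    (K L : Type) [Field K] [Field L] [NumberField K] [NumberField L]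
    [Algebra K L] [IsGalois K L] [FiniteDimensional K L]
    (S : Finset (TateNF.PlaceOf K))
    -- `S` contains all the infinite places of `K`
    (hSinf : ∀ w : NumberField.InfinitePlace K, Sum.inl w ∈ S)
    -- `S` contains all the finite places of `K` that ramify in `L/K`
    (hSram : ∀ (p : IsDedekindDomain.HeightOneSpectrum (NumberField.RingOfIntegers K))
      (P : IsDedekindDomain.HeightOneSpectrum (NumberField.RingOfIntegers L)),
      P.asIdeal.comap (algebraMap (NumberField.RingOfIntegers K) (NumberField.RingOfIntegers L))
          = p.asIdeal →
      1 < Ideal.ramificationIdx'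
          p.asIdeal P.asIdeal →
      Sum.inr p ∈ S)
    -- for each `p ∈ S`, a fixed choice of a place `p(L)` of `L` above `p`
    (PL : ∀ p ∈ S, ↥(TateNF.SL K L S))
    (hPL : ∀ (p : TateNF.PlaceOf K) (hp : p ∈ S), TateNF.LiesAbove K L (PL p hp : TateNF.PlaceOf L) p)
    -- a finite place `p0 ∈ S` whose decomposition group is all of `G`
    (p0 : TateNF.PlaceOf K) (hp0S : p0 ∈ S)
    (hp0fin : ∃ v : IsDedekindDomain.HeightOneSpectrum (NumberField.RingOfIntegers K),
      p0 = Sum.inr v)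
    (hp0full : TateNF.DecompGrp K L S (PL p0 hp0S) = ⊤)
    :
    ∀ x : Y K L S, x ∈ Xsub K L S → (∑ σ : L ≃ₐ[K] L, σ • x) = 0 →
      x ∈ AddSubgroup.closure
        {z : Y K L S | ∃ (σ : L ≃ₐ[K] L) (y : Y K L S), y ∈ Xsub K L S ∧ z = σ • y - y} :=
  Hminus1_X_vanishes_general K L S PL p0 hp0S hp0full
end

section
/- Let L/K be a Galois extension of number fields. If there exists a finite place p of K whose decomposition group is all of Gal(L/K) (equivalently, exactly one place of L lies above p), then the group Gal(L/K) is solvable. -/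
set_option linter.unusedSectionVars false
set_option synthInstance.maxHeartbeats 1000000
set_option maxHeartbeats 1000000

/-!
The decomposition group `D` of `𝔭` acts on the finite residue field `B ⧸ 𝔭`, whose automorphisms
commute, so `⁅D, D⁆` lies in the inertia group `I`. An element of `I` acts on the line `𝔭 ⧸ 𝔭 ^ 2`
over `B ⧸ 𝔭` by a scalar, so `⁅I, I⁆` lies in the group `W` of elements acting trivially on `B ⧸ 𝔭`
and on `𝔭 ⧸ 𝔭 ^ 2`. Finally `W` is a `p`-group for the residue characteristic `p`: if `σ ∈ W` has
order `m` prime to `p`, then `σ ^ m • x - x ≡ m * (σ • x - x)` shows inductively that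
`σ • x ≡ x` modulo every power of `𝔭`, so `σ = 1` by Krull's intersection theorem.
-/

open Pointwise

theorem Subgroup.isSolvable_of_commutator_le {G : Type*} [Group G] {A B : Subgroup G}
    (hBA : B ≤ A) (hAB : ⁅A, A⁆ ≤ B) [Group.IsSolvable B] : Group.IsSolvable A := by
  have : Group.IsSolvable (B.subgroupOf A) :=
    Group.isSolvable_of_isSolvable_injective (f := (subgroupOfEquivOfLe hBA).toMonoidHom)
      (subgroupOfEquivOfLe hBA).injective
  have hle : _root_.commutator A ≤ B.subgroupOf A := by
    rw [← map_le_map_iff_of_injective A.subtype_injective, map_subtype_commutator,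
      subgroupOf_map_subtype, inf_eq_left.mpr hBA]
    exact hAB
  refine (Group.isSolvable_iff_subgroup_quotient (_root_.commutator A)).mpr
    ⟨Group.isSolvable_of_isSolvable_injective (inclusion_injective hle), ?_⟩
  exact inferInstanceAs (Group.IsSolvable (Abelianization A))

theorem RingEquiv.commute_of_finite {k : Type*} [Field k] [Finite k] (f g : k ≃+* k) :
    Commute f g := by
  have : Fact (ringChar k).Prime := ⟨CharP.char_is_prime k _⟩
  let := ZMod.algebra k (ringChar k)
  let toGal (e : k ≃+* k) : Gal(k/ZMod (ringChar k)) :=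
    .ofRingEquiv (f := e) fun r ↦ congr($(RingHom.ext_zmod
      ((e : k →+* k).comp (algebraMap _ k)) (algebraMap _ k)) r)
  let := IsCyclic.commGroup (α := Gal(k/ZMod (ringChar k)))
  ext x
  exact congr($(mul_comm (toGal f) (toGal g)) x)

namespace Ideal

variable {B G : Type*} [CommRing B] [Group G] [MulSemiringAction G B] (𝔭 : Ideal B)

theorem smul_mem_of_mem_stabilizer {σ : G} (hσ : σ ∈ MulAction.stabilizer G 𝔭) {x : B}
    (hx : x ∈ 𝔭) : σ • x ∈ 𝔭 := by
  rw [← MulAction.mem_stabilizer_iff.mp hσ]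
  exact smul_mem_pointwise_smul σ x 𝔭 hx

theorem commutator_stabilizer_le_inertia [𝔭.IsMaximal] [Finite (B ⧸ 𝔭)] :
    ⁅MulAction.stabilizer G 𝔭, MulAction.stabilizer G 𝔭⁆ ≤ 𝔭.inertia G := by
  let := Quotient.field 𝔭
  let residue (σ : G) (hσ : σ ∈ MulAction.stabilizer G 𝔭) : (B ⧸ 𝔭) ≃+* (B ⧸ 𝔭) :=
    quotientEquiv 𝔭 𝔭 (MulSemiringAction.toRingEquiv G B σ)
      (MulAction.mem_stabilizer_iff.mp hσ).symm
  refine Subgroup.commutator_le.mpr fun σ hσ τ hτ x ↦ ?_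
  rw [commutatorElement_def, mul_smul, mul_smul, mul_smul]
  set y := σ⁻¹ • τ⁻¹ • x
  have key : Quotient.mk 𝔭 (σ • τ • y) = Quotient.mk 𝔭 (τ • σ • y) :=
    congr($((residue σ hσ).commute_of_finite (residue τ hτ)) (Quotient.mk 𝔭 y))
  have hx : x = τ • σ • y := by simp [y]
  rw [hx]
  exact Quotient.eq.mp key

theorem stabilizer_le_stabilizer_pow (n : ℕ) :
    MulAction.stabilizer G 𝔭 ≤ MulAction.stabilizer G (𝔭 ^ n) := fun σ hσ ↦ by
  rw [MulAction.mem_stabilizer_iff, smul_pow', MulAction.mem_stabilizer_iff.mp hσ]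

variable (G) in
def wildInertia : Subgroup G where
  carrier := {σ | σ ∈ 𝔭.inertia G ∧ ∀ y ∈ 𝔭, σ • y - y ∈ 𝔭 ^ 2}
  one_mem' := ⟨one_mem _, fun y _ ↦ by simp⟩
  mul_mem' := by
    rintro σ τ ⟨hσ, hσ𝔭⟩ ⟨hτ, hτ𝔭⟩
    refine ⟨mul_mem hσ hτ, fun y hy ↦ ?_⟩
    have hτy := smul_mem_of_mem_stabilizer 𝔭 (inertia_le_stabilizer 𝔭 hτ) hy
    simpa [mul_smul] using add_mem (hσ𝔭 _ hτy) (hτ𝔭 y hy)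
  inv_mem' := by
    rintro σ ⟨hσ, hσ𝔭⟩
    refine ⟨inv_mem hσ, fun y hy ↦ ?_⟩
    have hσy := smul_mem_of_mem_stabilizer 𝔭 (inertia_le_stabilizer 𝔭 (inv_mem hσ)) hy
    simpa using sub_mem_comm_iff.mp (hσ𝔭 _ hσy)

theorem wildInertia_le_inertia : 𝔭.wildInertia G ≤ 𝔭.inertia G := fun _ hσ ↦ hσ.1

theorem smul_sub_mem_pow_succ_of_mem_wildInertia {σ : G} (hσ : σ ∈ 𝔭.wildInertia G) (n : ℕ) :
    ∀ y ∈ 𝔭 ^ n, σ • y - y ∈ 𝔭 ^ (n + 1) := by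
  induction n with
  | zero => simpa using hσ.1
  | succ n ih =>
    intro y hy
    rw [pow_succ] at hy
    refine Submodule.mul_induction_on hy (fun m hm q hq ↦ ?_) fun y z hy hz ↦ ?_
    · have hσm := smul_mem_of_mem_stabilizer _
        (stabilizer_le_stabilizer_pow 𝔭 n (inertia_le_stabilizer 𝔭 hσ.1)) hm
      have expand : σ • (m * q) - m * q = σ • m * (σ • q - q) + (σ • m - m) * q := by
        rw [smul_mul']
        ring
      rw [expand]
      refine add_mem ?_ ?_
      · simpa [← pow_add] using mul_mem_mul hσm (hσ.2 q hq)
      · simpa [← pow_succ] using mul_mem_mul (ih m hm) hq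
    · simpa [smul_add, add_sub_add_comm] using add_mem hy hz

theorem pow_smul_sub_sub_mem {σ : G} {n : ℕ} (hσ : σ ∈ (𝔭 ^ n).inertia G)
    (hσn : ∀ y ∈ 𝔭 ^ n, σ • y - y ∈ 𝔭 ^ (n + 1)) (k : ℕ) (x : B) :
    σ ^ k • x - x - k * (σ • x - x) ∈ 𝔭 ^ (n + 1) := by
  induction k with
  | zero => simp
  | succ k ih =>
    have expand : σ ^ (k + 1) • x - x - (k + 1 : ℕ) * (σ • x - x) =
        (σ • (σ ^ k • x - x) - (σ ^ k • x - x)) + (σ ^ k • x - x - k * (σ • x - x)) := by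
      rw [pow_succ', mul_smul, smul_sub]
      push_cast
      ring
    rw [expand]
    exact add_mem (hσn _ (pow_mem hσ k x)) ih

variable [IsDedekindDomain B]

theorem exists_eq_span_singleton_sup_sq [𝔭.IsPrime] (h𝔭 : 𝔭 ≠ ⊥) :
    ∃ π ∈ 𝔭, 𝔭 = span {π} ⊔ 𝔭 ^ 2 := by
  obtain ⟨π, hπ, hπ2⟩ := 𝔭.exists_mem_pow_notMem_pow_succ h𝔭 IsPrime.ne_top' 1
  rw [pow_one] at hπ
  refine ⟨π, hπ, ?_⟩
  have hlt : 𝔭 ^ (1 + 1) < span {π} ⊔ 𝔭 ^ 2 :=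
    lt_of_le_of_ne le_sup_right fun h ↦ hπ2 (h ▸ mem_sup_left (mem_span_singleton_self π))
  have hle : span {π} ⊔ 𝔭 ^ 2 ≤ 𝔭 ^ 1 := by
    rw [pow_one]
    exact sup_le ((span_singleton_le_iff_mem 𝔭).mpr hπ) (pow_le_self two_ne_zero)
  simpa using (eq_prime_pow_of_succ_lt_of_le h𝔭 hlt hle).symm

-- `𝔭 ⧸ 𝔭 ^ 2` is a line over `B ⧸ 𝔭`, on which the inertia group acts `B ⧸ 𝔭`-linearly.
theorem exists_smul_sub_mul_mem_sq [𝔭.IsPrime] (h𝔭 : 𝔭 ≠ ⊥) {σ : G} (hσ : σ ∈ 𝔭.inertia G) :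
    ∃ a : B, ∀ y ∈ 𝔭, σ • y - a * y ∈ 𝔭 ^ 2 := by
  obtain ⟨π, hπ, h𝔭π⟩ := exists_eq_span_singleton_sup_sq 𝔭 h𝔭
  have hσ𝔭 := inertia_le_stabilizer 𝔭 hσ
  have decomp : ∀ y ∈ 𝔭, ∃ b, ∃ z ∈ 𝔭 ^ 2, y = b * π + z := fun y hy ↦ by
    rw [h𝔭π] at hy
    obtain ⟨_, hbπ, z, hz, rfl⟩ := Submodule.mem_sup.mp hy
    obtain ⟨b, rfl⟩ := mem_span_singleton'.mp hbπ
    exact ⟨b, z, hz, rfl⟩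
  obtain ⟨a, z, hz, hσπ⟩ := decomp _ (smul_mem_of_mem_stabilizer 𝔭 hσ𝔭 hπ)
  refine ⟨a, fun y hy ↦ ?_⟩
  obtain ⟨b, w, hw, rfl⟩ := decomp y hy
  have hσw := smul_mem_of_mem_stabilizer _ (stabilizer_le_stabilizer_pow 𝔭 2 hσ𝔭) hw
  have expand : σ • (b * π + w) - a * (b * π + w) =
      (σ • b - b) * σ • π + b * z + (σ • w - a * w) := by
    rw [smul_add, smul_mul', hσπ]
    ring
  rw [sq] at hz hw hσw ⊢
  rw [expand]
  refine add_mem (add_mem (mul_mem_mul (hσ b) ?_) (mul_mem_left _ _ hz))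
    (sub_mem hσw (mul_mem_left _ _ hw))
  exact smul_mem_of_mem_stabilizer 𝔭 hσ𝔭 hπ

theorem commutator_inertia_le_wildInertia [𝔭.IsPrime] (h𝔭 : 𝔭 ≠ ⊥) :
    ⁅𝔭.inertia G, 𝔭.inertia G⁆ ≤ 𝔭.wildInertia G := by
  refine Subgroup.commutator_le.mpr fun σ hσ τ hτ ↦ ⟨?_, fun y hy ↦ ?_⟩
  · exact (𝔭.inertia G).commutator_le_self (Subgroup.commutator_mem_commutator hσ hτ)
  obtain ⟨a, ha⟩ := exists_smul_sub_mul_mem_sq 𝔭 h𝔭 hσ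
  obtain ⟨b, hb⟩ := exists_smul_sub_mul_mem_sq 𝔭 h𝔭 hτ
  have mem {ρ : G} (hρ : ρ ∈ 𝔭.inertia G) {x : B} (hx : x ∈ 𝔭) : ρ • x ∈ 𝔭 :=
    smul_mem_of_mem_stabilizer 𝔭 (inertia_le_stabilizer 𝔭 hρ) hx
  rw [commutatorElement_def, mul_smul, mul_smul, mul_smul]
  set x := σ⁻¹ • τ⁻¹ • y
  have hx : x ∈ 𝔭 := mem (inv_mem hσ) (mem (inv_mem hτ) hy)
  have hy : y = τ • σ • x := by simp [x]
  rw [hy]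
  have expand : σ • τ • x - τ • σ • x = (σ • τ • x - a * τ • x) + a * (τ • x - b * x)
      - (τ • σ • x - b * σ • x) - b * (σ • x - a * x) := by ring
  rw [expand]
  exact sub_mem (sub_mem (add_mem (ha _ (mem hτ hx)) (mul_mem_left _ _ (hb x hx)))
    (hb _ (mem hσ hx))) (mul_mem_left _ _ (ha x hx))

theorem eq_one_of_mem_wildInertia_of_pow_eq_one [FaithfulSMul G B] [𝔭.IsPrime] {σ : G}
    (hσ : σ ∈ 𝔭.wildInertia G) {m : ℕ} (hm : σ ^ m = 1) (hm𝔭 : (m : B) ∉ 𝔭) : σ = 1 := by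
  have hpow (n : ℕ) : σ ∈ (𝔭 ^ n).inertia G := by
    induction n with
    | zero => simp
    | succ n ih =>
      intro x
      have h := pow_smul_sub_sub_mem 𝔭 ih (smul_sub_mem_pow_succ_of_mem_wildInertia 𝔭 hσ n) m x
      rw [hm, one_smul, sub_self, zero_sub, neg_mem_iff] at h
      exact (IsPrime.mul_mem_pow 𝔭 h).resolve_left hm𝔭
  refine FaithfulSMul.eq_of_smul_eq_smul (α := B) fun x ↦ ?_
  have hx : σ • x - x ∈ ⨅ n, 𝔭 ^ n := Submodule.mem_iInf _ |>.mpr fun n ↦ hpow n x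
  rw [iInf_pow_eq_bot_of_isDomain 𝔭 IsPrime.ne_top', mem_bot, sub_eq_zero] at hx
  rw [hx, one_smul]

theorem isPGroup_wildInertia [Finite G] [FaithfulSMul G B] [𝔭.IsPrime] (p : ℕ) [hp : Fact p.Prime]
    [CharP (B ⧸ 𝔭) p] : IsPGroup p (𝔭.wildInertia G) := by
  refine (isPGroup_iff_primeFactors_card_subset hp.out.ne_zero).mpr fun q hq ↦ ?_
  have hq' : Fact q.Prime := ⟨Nat.prime_of_mem_primeFactors hq⟩
  obtain ⟨σ, hσ⟩ := exists_prime_orderOf_dvd_card' q (Nat.dvd_of_mem_primeFactors hq)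
  have hq𝔭 : (q : B) ∈ 𝔭 := by
    by_contra h
    have hσ1 := eq_one_of_mem_wildInertia_of_pow_eq_one 𝔭 σ.2
      (by rw [← Subgroup.coe_pow, ← hσ, pow_orderOf_eq_one, Subgroup.coe_one]) h
    rw [OneMemClass.coe_eq_one.mp hσ1, orderOf_one] at hσ
    exact hq'.out.one_lt.ne hσ
  have hpq : p ∣ q := (CharP.cast_eq_zero_iff (B ⧸ 𝔭) p q).mp <| by
    rwa [← map_natCast (Quotient.mk 𝔭), Quotient.eq_zero_iff_mem]
  rw [(Nat.prime_dvd_prime_iff_eq hp.out hq'.out).mp hpq]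
  exact hq'.out.mem_primeFactors_self

theorem isSolvable_stabilizer [Finite G] [FaithfulSMul G B] [𝔭.IsPrime] (h𝔭 : 𝔭 ≠ ⊥) [Finite (B ⧸ 𝔭)] : Group.IsSolvable (MulAction.stabilizer G 𝔭) := by
  have := IsPrime.isMaximal ‹_› h𝔭
  let := Quotient.field 𝔭
  have : Fact (ringChar (B ⧸ 𝔭)).Prime := ⟨CharP.char_is_prime (B ⧸ 𝔭) _⟩
  have := (isPGroup_wildInertia 𝔭 (G := G) (ringChar (B ⧸ 𝔭))).isNilpotent
  have : Group.IsSolvable (𝔭.inertia G) := Subgroup.isSolvable_of_commutator_le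
    (wildInertia_le_inertia 𝔭) (commutator_inertia_le_wildInertia 𝔭 h𝔭)
  exact Subgroup.isSolvable_of_commutator_le (inertia_le_stabilizer 𝔭)
    (commutator_stabilizer_le_inertia 𝔭)

end Ideal

namespace NumberField

variable {K L : Type*} [Field K] [Field L] [NumberField K] [NumberField L] [Algebra K L]
  [FiniteDimensional K L]

theorem galRestrict_apply_eq_smul (σ : L ≃ₐ[K] L) (x : 𝓞 L) :
    galRestrict (𝓞 K) K L (𝓞 L) σ x = σ • x :=
  RingOfIntegers.ext (algebraMap_galRestrict_apply (𝓞 K) σ x)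

instance : FaithfulSMul (L ≃ₐ[K] L) (𝓞 L) :=
  ⟨fun h ↦ (galRestrict (𝓞 K) K L (𝓞 L)).injective <| AlgEquiv.ext fun x ↦ by
    rw [galRestrict_apply_eq_smul, galRestrict_apply_eq_smul, h]⟩

end NumberField

namespace TateNF

open NumberField IsDedekindDomain

theorem smul_asIdeal_eq_pointwise_smul {K L : Type} [Field K] [Field L] [NumberField K]
    [NumberField L] [Algebra K L] [IsGalois K L] [FiniteDimensional K L] (σ : L ≃ₐ[K] L)
    (v : HeightOneSpectrum (𝓞 L)) : (σ • v).asIdeal = σ • v.asIdeal := by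
  ext x
  rw [smul_asIdeal, Ideal.mem_comap, Ideal.mem_pointwise_smul_iff_inv_smul_mem, galRes_apply,
    galRestrict_apply_eq_smul]

end TateNF

open TateNF in
theorem solvable_of_exists_full_decomposition_group
    (K L : Type) [Field K] [Field L] [NumberField K] [NumberField L]
    [Algebra K L] [IsGalois K L] [FiniteDimensional K L]
    (hyp : ∃ (p : IsDedekindDomain.HeightOneSpectrum (NumberField.RingOfIntegers K))
      (P : IsDedekindDomain.HeightOneSpectrum (NumberField.RingOfIntegers L)),
      P.asIdeal.comap (algebraMap (NumberField.RingOfIntegers K) (NumberField.RingOfIntegers L))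
          = p.asIdeal ∧
      MulAction.stabilizer (L ≃ₐ[K] L) P = ⊤) :
    IsSolvable (L ≃ₐ[K] L) := by
  obtain ⟨-, P, -, hP⟩ := hyp
  have hstab : MulAction.stabilizer (L ≃ₐ[K] L) P.asIdeal = ⊤ := by
    refine eq_top_iff.mpr fun σ _ ↦ ?_
    have hσ : σ ∈ MulAction.stabilizer (L ≃ₐ[K] L) P := hP ▸ Subgroup.mem_top σ
    rw [MulAction.mem_stabilizer_iff, ← smul_asIdeal_eq_pointwise_smul, hσ.out]
  have := Ideal.finiteQuotientOfFreeOfNeBot P.asIdeal P.ne_bot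
  have := Ideal.isSolvable_stabilizer P.asIdeal P.ne_bot (G := L ≃ₐ[K] L)
  rw [hstab] at this
  exact Group.isSolvable_of_isSolvable_injective
    (f := (Subgroup.topEquiv (G := L ≃ₐ[K] L)).symm.toMonoidHom) (MulEquiv.injective _)
end
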